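/- arXiv:1708.08301 — 2 statements merged into one kernel-verified Lean document; each statement's English description precedes it below -/
import Mathlib

section
/- Let G be a finite nilpotent group and A a nontrivial normal subgroup of G. Then M_G(A) = M(A)·[A,G], where M(A) is the intersection of the maximal normal subgroups of A and M_G(A) is the intersection of the maximal G-invariant proper subgroups of A. -/
/-- `B` is a `G`-invariant subgroup of `A`: a subgroup of `A` normalized by all of `G`. -/
def IsGInv (G : Type*) [Group G] (A B : Subgroup G) : Prop :=
  B ≤ A ∧ ∀ g : G, ∀ b ∈ B, g * b * g⁻¹ ∈ B

/-- `B` is a maximal proper `G`-invariant subgroup of `A`. -/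
def IsMaxGInv (G : Type*) [Group G] (A B : Subgroup G) : Prop :=
  IsGInv G A B ∧ B < A ∧ ∀ C : Subgroup G, IsGInv G A C → C < A → B ≤ C → B = C

/-- `M_G(A)`: the intersection of all maximal proper `G`-invariant subgroups of `A`. -/
def MG (G : Type*) [Group G] (A : Subgroup G) : Subgroup G :=
  sInf {B | IsMaxGInv G A B}

/-- `B` is a maximal proper normal subgroup of `A` (as subgroups of `G`). -/
def IsMaxNormalIn (G : Type*) [Group G] (A B : Subgroup G) : Prop :=
  (B ≤ A ∧ ∀ a ∈ A, ∀ b ∈ B, a * b * a⁻¹ ∈ B) ∧ B < A ∧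
    ∀ C : Subgroup G, (C ≤ A ∧ ∀ a ∈ A, ∀ c ∈ C, a * c * a⁻¹ ∈ C) → C < A → B ≤ C → B = C

/-- `M(A)`: the Mel'nikov subgroup (cosocle) of `A`, the intersection of all maximal
proper normal subgroups of `A`. -/
def Mel (G : Type*) [Group G] (A : Subgroup G) : Subgroup G :=
  sInf {B | IsMaxNormalIn G A B}

/-!
Write `T = ⁅A, G⁆`; every subgroup between `T` and `A` is normalized by `G`. If `B` is a maximal
`G`-invariant subgroup of `A`, then `A / B` is a minimal normal subgroup of the nilpotent group
`G / B`, hence central: so `T ≤ B`, `B` is a maximal normal subgroup of `A`, and `M(A) T ≤ B`.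
Conversely, a maximal normal subgroup of the nilpotent group `A` has prime index, so the elements
of `A / M(A)` have squarefree order. For `x ∈ A` outside `M(A) T`, pick `B ⊇ M(A) T` maximal with
`x ∉ B`. Every nontrivial cyclic subgroup of `A / B` contains the image of `x`, and with squarefree
orders this forces `A / B` to be generated by it; hence `B` is maximal `G`-invariant.
-/

open Subgroup

open scoped commutatorElement

section

variable {G : Type*} [Group G]

theorem isMaxGInv_iff_maximal {A B : Subgroup G} :
    IsMaxGInv G A B ↔ Maximal (fun C => IsGInv G A C ∧ C < A) B :=
  ⟨fun ⟨hB, hBA, hmax⟩ => ⟨⟨hB, hBA⟩, fun _ ⟨hC, hCA⟩ hBC => (hmax _ hC hCA hBC).ge⟩,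
    fun h => ⟨h.1.1, h.1.2, fun _ hC hCA hBC => h.eq_of_le ⟨hC, hCA⟩ hBC⟩⟩

theorem isMaxNormalIn_iff_maximal {A B : Subgroup G} :
    IsMaxNormalIn G A B ↔
      Maximal (fun C => (C ≤ A ∧ ∀ a ∈ A, ∀ c ∈ C, a * c * a⁻¹ ∈ C) ∧ C < A) B :=
  ⟨fun ⟨hB, hBA, hmax⟩ => ⟨⟨hB, hBA⟩, fun _ ⟨hC, hCA⟩ hBC => (hmax _ hC hCA hBC).ge⟩,
    fun h => ⟨h.1.1, h.1.2, fun _ hC hCA hBC => h.eq_of_le ⟨hC, hCA⟩ hBC⟩⟩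

theorem MG_bot : MG G ⊥ = ⊤ :=
  sInf_eq_top.mpr fun _ hB => absurd hB.2.1 not_lt_bot

theorem Mel_bot : Mel G ⊥ = ⊤ :=
  sInf_eq_top.mpr fun _ hB => absurd hB.2.1 not_lt_bot

theorem MG_le_of_isMaxGInv {A B : Subgroup G} (hB : IsMaxGInv G A B) : MG G A ≤ B :=
  sInf_le hB

theorem Mel_le_of_isMaxNormalIn {A B : Subgroup G} (hB : IsMaxNormalIn G A B) : Mel G A ≤ B :=
  sInf_le hB

theorem MG_le_self [Finite G] {A : Subgroup G} (hA : A ≠ ⊥) : MG G A ≤ A := by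
  obtain ⟨B, -, hB⟩ := exists_maximal_ge_of_wellFoundedGT (fun C => IsGInv G A C ∧ C < A) ⊥
    ⟨⟨bot_le, fun _ _ hb => by simp_all⟩, bot_lt_iff_ne_bot.mpr hA⟩
  exact (MG_le_of_isMaxGInv (isMaxGInv_iff_maximal.mpr hB)).trans hB.1.1.1

theorem Mel_le_self [Finite G] {A : Subgroup G} (hA : A ≠ ⊥) : Mel G A ≤ A := by
  obtain ⟨B, -, hB⟩ := exists_maximal_ge_of_wellFoundedGT
    (fun C => (C ≤ A ∧ ∀ a ∈ A, ∀ c ∈ C, a * c * a⁻¹ ∈ C) ∧ C < A) ⊥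
    ⟨⟨bot_le, fun _ _ _ hb => by simp_all⟩, bot_lt_iff_ne_bot.mpr hA⟩
  exact (Mel_le_of_isMaxNormalIn (isMaxNormalIn_iff_maximal.mpr hB)).trans hB.1.1.1

theorem isGInv_of_commutator_le {A B : Subgroup G} (hAB : ⁅A, (⊤ : Subgroup G)⁆ ≤ B)
    (hBA : B ≤ A) : IsGInv G A B := by
  refine ⟨hBA, fun g b hb => ?_⟩
  have : g * b * g⁻¹ = b * ⁅b⁻¹, g⁆ := by group
  rw [this]
  exact B.mul_mem hb (hAB (commutator_mem_commutator (A.inv_mem (hBA hb)) (mem_top g)))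

theorem Subgroup.Normal.exists_mem_center_ne_one [Group.IsNilpotent G] {N : Subgroup G}
    (hN : N.Normal) (hN' : N ≠ ⊥) : ∃ z ∈ N, z ∈ center G ∧ z ≠ 1 := by
  obtain ⟨n, hn⟩ := Group.IsNilpotent.nilpotent (G := G)
  suffices ∀ k, N ⊓ upperCentralSeries G k ≠ ⊥ → ∃ z ∈ N, z ∈ center G ∧ z ≠ 1 from
    this n (by rwa [hn, inf_top_eq])
  intro k
  induction k with
  | zero => simp
  | succ k ih =>
    intro hk
    by_cases hk' : N ⊓ upperCentralSeries G k = ⊥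
    · obtain ⟨⟨z, hzN, hz⟩, hz1⟩ := ne_bot_iff_exists_ne_one.mp hk
      refine ⟨z, hzN, mem_center_iff.mpr fun g => ?_, fun h => hz1 (Subtype.ext h)⟩
      have hcomm : ⁅z, g⁆ ∈ N ⊓ upperCentralSeries G k :=
        ⟨commutator_le_left N ⊤ (commutator_mem_commutator hzN (mem_top g)),
          mem_upperCentralSeries_succ_iff.mp hz g⟩
      rw [hk', mem_bot] at hcomm
      exact (commutatorElement_eq_one_iff_commute.mp hcomm).eq.symm
    · exact ih hk'

theorem commutator_le_of_isMaxGInv [Group.IsNilpotent G] {A B : Subgroup G} (hA : A.Normal)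
    (hB : IsMaxGInv G A B) : ⁅A, (⊤ : Subgroup G)⁆ ≤ B := by
  have : B.Normal := ⟨fun b hb g => hB.1.2 g b hb⟩
  have : B.upperCentralSeriesStep.Normal := by
    rw [B.upperCentralSeriesStep_eq_comap_center]; infer_instance
  have hAB : A.map (QuotientGroup.mk' B) ≠ ⊥ := by
    rw [Ne, Subgroup.map_eq_bot_iff, QuotientGroup.ker_mk']
    exact hB.2.1.not_ge
  obtain ⟨_, ⟨a, haA, rfl⟩, ha, ha1⟩ :=
    (hA.map _ (QuotientGroup.mk'_surjective B)).exists_mem_center_ne_one hAB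
  have hcentral : A ⊓ B.upperCentralSeriesStep = A := by
    by_contra hne
    have hBC : B ≤ A ⊓ B.upperCentralSeriesStep := le_inf hB.1.1 fun b hb y =>
      commutator_le_left B ⊤ (commutator_mem_commutator hb (mem_top y))
    have hC : IsGInv G A (A ⊓ B.upperCentralSeriesStep) :=
      ⟨inf_le_left, fun g c hc => (normal_inf_normal A _).conj_mem c hc g⟩
    have haC : a ∈ A ⊓ B.upperCentralSeriesStep :=
      ⟨haA, by rw [B.upperCentralSeriesStep_eq_comap_center]; exact ha⟩
    rw [← hB.2.2 _ hC (lt_of_le_of_ne inf_le_left hne) hBC] at haC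
    exact ha1 ((QuotientGroup.eq_one_iff a).mpr haC)
  exact commutator_le.mpr fun x hx g _ =>
    (B.mem_upperCentralSeriesStep x).mp (inf_eq_left.mp hcentral hx) g

theorem isMaxNormalIn_of_isMaxGInv {A B : Subgroup G} (hAB : ⁅A, (⊤ : Subgroup G)⁆ ≤ B)
    (hB : IsMaxGInv G A B) : IsMaxNormalIn G A B :=
  ⟨⟨hB.1.1, fun a _ b hb => hB.1.2 a b hb⟩, hB.2.1, fun C hC hCA hBC =>
    hB.2.2 C (isGInv_of_commutator_le (hAB.trans hBC) hC.1) hCA hBC⟩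

theorem Mel_sup_commutator_le_MG [Group.IsNilpotent G] {A : Subgroup G} (hA : A.Normal) :
    Mel G A ⊔ ⁅A, (⊤ : Subgroup G)⁆ ≤ MG G A :=
  le_sInf fun _ hB =>
    have hAB := commutator_le_of_isMaxGInv hA hB
    sup_le (Mel_le_of_isMaxNormalIn (isMaxNormalIn_of_isMaxGInv hAB hB)) hAB

theorem IsMaxNormalIn.subgroupOf_normal {A N : Subgroup G} (hN : IsMaxNormalIn G A N) :
    (N.subgroupOf A).Normal :=
  ⟨fun n hn a => mem_subgroupOf.mpr (hN.1.2 a a.2 n hn)⟩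

theorem IsMaxNormalIn.isSimpleGroup {A N : Subgroup G} (hN : IsMaxNormalIn G A N)
    [(N.subgroupOf A).Normal] : IsSimpleGroup (A ⧸ N.subgroupOf A) := by
  refine { exists_pair_ne := ?_, eq_bot_or_eq_top_of_normal := fun H hH => ?_ }
  · obtain ⟨a, ha, haN⟩ := SetLike.exists_of_lt hN.2.1
    exact ⟨QuotientGroup.mk ⟨a, ha⟩, 1,
      fun h => haN (mem_subgroupOf.mp ((QuotientGroup.eq_one_iff _).mp h))⟩
  set C := (H.comap (QuotientGroup.mk' (N.subgroupOf A))).map A.subtype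
  have hCA : C ≤ A := map_subtype_le _
  have hmemC {a : A} : (a : G) ∈ C ↔ (a : A ⧸ N.subgroupOf A) ∈ H :=
    mem_map_iff_mem A.subtype_injective
  have hNC : N ≤ C := fun n hn => by
    rw [← show ((⟨n, hN.1.1 hn⟩ : A) : G) = n from rfl, hmemC,
      (QuotientGroup.eq_one_iff _).mpr (mem_subgroupOf.mpr hn)]
    exact one_mem H
  have hCnormal : ∀ a ∈ A, ∀ c ∈ C, a * c * a⁻¹ ∈ C := by
    rintro a ha _ ⟨c, hc, rfl⟩
    exact ⟨⟨a, ha⟩ * c * ⟨a, ha⟩⁻¹, (hH.comap _).conj_mem c hc _, rfl⟩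
  rcases hCA.lt_or_eq with hlt | heq
  · left
    have hNC' := hN.2.2 C ⟨hCA, hCnormal⟩ hlt hNC
    refine eq_bot_iff.mpr fun q hq => ?_
    obtain ⟨a, rfl⟩ := QuotientGroup.mk_surjective q
    rw [mem_bot, QuotientGroup.eq_one_iff, mem_subgroupOf, hNC', hmemC]
    exact hq
  · right
    refine eq_top_iff.mpr fun q _ => ?_
    obtain ⟨a, rfl⟩ := QuotientGroup.mk_surjective q
    rw [← hmemC, heq]
    exact a.2

theorem IsMaxNormalIn.exists_prime_pow_mem [Finite G] [Group.IsNilpotent G] {A N : Subgroup G}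
    (hN : IsMaxNormalIn G A N) : ∃ p, p.Prime ∧ p ∣ Nat.card G ∧ ∀ a ∈ A, a ^ p ∈ N := by
  have := hN.subgroupOf_normal
  have := hN.isSimpleGroup
  refine ⟨Nat.card (A ⧸ N.subgroupOf A), IsSimpleGroup.prime_card,
    (card_quotient_dvd_card _).trans (card_subgroup_dvd_card A), fun a ha => ?_⟩
  have h := pow_card_eq_one' (G := A ⧸ N.subgroupOf A) (x := QuotientGroup.mk ⟨a, ha⟩)
  rw [← QuotientGroup.mk_pow, QuotientGroup.eq_one_iff, mem_subgroupOf] at h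
  exact h

theorem pow_radical_card_mem_Mel [Finite G] [Group.IsNilpotent G] {A : Subgroup G} {a : G}
    (ha : a ∈ A) : a ^ UniqueFactorizationMonoid.radical (Nat.card G) ∈ Mel G A :=
  mem_sInf.mpr fun N hN => by
    obtain ⟨p, hp, hpG, hpow⟩ := IsMaxNormalIn.exists_prime_pow_mem hN
    obtain ⟨k, hk⟩ := (UniqueFactorizationMonoid.dvd_radical_iff_of_irreducible hp
      Nat.card_pos.ne').mpr hpG
    rw [hk, pow_mul]
    exact N.pow_mem (hpow a ha) k

theorem squarefree_orderOf_mk [Finite G] [Group.IsNilpotent G] {A B : Subgroup G} [B.Normal]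
    (hB : Mel G A ≤ B) {a : G} (ha : a ∈ A) : Squarefree (orderOf (a : G ⧸ B)) := by
  refine (UniqueFactorizationMonoid.squarefree_radical (a := Nat.card G)).squarefree_of_dvd
    (orderOf_dvd_of_pow_eq_one ?_)
  rw [← QuotientGroup.mk_pow, QuotientGroup.eq_one_iff]
  exact hB (pow_radical_card_mem_Mel ha)

theorem le_zpowers_of_forall_mem_zpowers {H : Subgroup G} (hH : ∀ q ∈ H, Squarefree (orderOf q))
    {x : G} (hx : x ≠ 1) (hxH : ∀ q ∈ H, q ≠ 1 → x ∈ zpowers q) : H ≤ zpowers x := by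
  intro q hq
  rcases eq_or_ne q 1 with rfl | hq1
  · exact one_mem _
  have hxq := hxH q hq hq1
  have hdvd : orderOf x ∣ orderOf q := orderOf_dvd_of_mem_zpowers hxq
  have hq0 : orderOf q ≠ 0 := (hH q hq).ne_zero
  have hx0 : orderOf x ≠ 0 := ne_zero_of_dvd_ne_zero hq0 hdvd
  have hord : orderOf x = orderOf q := by
    by_contra hne
    have hlt := lt_of_le_of_ne (Nat.le_of_dvd (Nat.pos_of_ne_zero hq0) hdvd) hne
    -- `x` is also a power of `q ^ orderOf x`, whose order is `orderOf q / orderOf x`.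
    have hdvd' := orderOf_dvd_of_mem_zpowers
      (hxH _ (H.pow_mem hq _) (pow_ne_one_of_lt_orderOf hx0 hlt))
    rw [orderOf_pow_of_dvd hx0 hdvd] at hdvd'
    exact hx (orderOf_eq_one_iff.mp
      (Nat.isUnit_iff.mp ((hH q hq) _ (Nat.mul_dvd_of_dvd_div hdvd hdvd'))))
  have : Finite (zpowers q) := (finite_zpowers.mpr (orderOf_ne_zero_iff.mp hq0)).to_subtype
  rw [eq_of_le_of_card_ge (zpowers_le.mpr hxq) (by rw [Nat.card_zpowers, Nat.card_zpowers, hord])]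
  exact mem_zpowers q

theorem exists_isMaxGInv_not_mem [Finite G] [Group.IsNilpotent G] {A : Subgroup G}
    (hA : A.Normal) (hnt : A ≠ ⊥) {x : G} (hxA : x ∈ A)
    (hxK : x ∉ Mel G A ⊔ ⁅A, (⊤ : Subgroup G)⁆) : ∃ B, IsMaxGInv G A B ∧ x ∉ B := by
  set K := Mel G A ⊔ ⁅A, (⊤ : Subgroup G)⁆
  have hKA : K ≤ A := sup_le (Mel_le_self hnt) (commutator_le_left A ⊤)
  obtain ⟨B, -, ⟨hKB, hBA, hxB⟩, hBmax⟩ :=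
    exists_maximal_ge_of_wellFoundedGT (fun C => K ≤ C ∧ C ≤ A ∧ x ∉ C) K ⟨le_rfl, hKA, hxK⟩
  have hx_mem : ∀ C, B < C → C ≤ A → x ∈ C := fun C hBC hCA => by_contra fun hxC =>
    hBC.not_ge (hBmax ⟨hKB.trans hBC.le, hCA, hxC⟩ hBC.le)
  have hBinv := isGInv_of_commutator_le (le_sup_right.trans hKB) hBA
  have : B.Normal := ⟨fun b hb g => hBinv.2 g b hb⟩
  set π := QuotientGroup.mk' B
  have hAx : A.map π ≤ zpowers (π x) := by
    refine le_zpowers_of_forall_mem_zpowers ?_ (fun h => hxB ((QuotientGroup.eq_one_iff x).mp h)) ?_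
    · rintro _ ⟨a, ha, rfl⟩
      exact squarefree_orderOf_mk (le_sup_left.trans hKB) ha
    · rintro _ ⟨a, ha, rfl⟩ ha1
      have hBC : B ≤ A ⊓ (zpowers (π a)).comap π := le_inf hBA fun b hb => by
        rw [mem_comap, show π b = 1 from (QuotientGroup.eq_one_iff b).mpr hb]
        exact one_mem _
      have haC : a ∈ A ⊓ (zpowers (π a)).comap π := ⟨ha, mem_zpowers _⟩
      exact (hx_mem _ (lt_of_le_of_ne hBC fun h => ha1 ((QuotientGroup.eq_one_iff a).mpr
        (h ▸ haC))) inf_le_left).2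
  refine ⟨B, isMaxGInv_iff_maximal.mpr ⟨⟨hBinv, lt_of_le_of_ne hBA fun h => hxB (h ▸ hxA)⟩,
    fun C ⟨_, hCA⟩ hBC => by_contra fun hCB => hCA.not_ge ?_⟩, hxB⟩
  have hxC := hx_mem C (lt_of_le_not_ge hBC hCB) hCA.le
  calc A ≤ (A.map π).comap π := le_comap_map _ _
    _ ≤ (zpowers (π x)).comap π := comap_mono hAx
    _ ≤ (C.map π).comap π := comap_mono (zpowers_le.mpr (mem_map_of_mem _ hxC))
    _ = C := by rw [comap_map_eq, QuotientGroup.ker_mk', sup_of_le_left hBC]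

end

theorem MG_eq_Mel_sup_commutator_of_nilpotent_general (G : Type*) [Group G] [Finite G]
    (hnil : Group.IsNilpotent G) (A : Subgroup G) (hA : A.Normal) :
    MG G A = Mel G A ⊔ ⁅A, (⊤ : Subgroup G)⁆ := by
  rcases eq_or_ne A ⊥ with rfl | hnt
  · rw [MG_bot, Mel_bot, top_sup_eq]
  refine le_antisymm (fun x hx => by_contra fun hxK => ?_) (Mel_sup_commutator_le_MG hA)
  obtain ⟨B, hB, hxB⟩ := exists_isMaxGInv_not_mem hA hnt (MG_le_self hnt hx) hxK
  exact hxB (MG_le_of_isMaxGInv hB hx)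

/-- If `G` is a finite nilpotent group and `A` a nontrivial normal subgroup, then
`M_G(A) = M(A)·[A,G]`. -/
theorem MG_eq_Mel_sup_commutator_of_nilpotent (G : Type*) [Group G] [Finite G]
    (hnil : Group.IsNilpotent G) (A : Subgroup G) (hA : A.Normal) (hnt : A ≠ ⊥) :
    MG G A = Mel G A ⊔ ⁅A, (⊤ : Subgroup G)⁆ :=
  MG_eq_Mel_sup_commutator_of_nilpotent_general G hnil A hA
end

section
/- Let G be a finite group and A a nontrivial normal subgroup of G such that A/M_G(A) is a nonabelian chief factor of G (i.e., A is narrow with nonabelian simple composition into the top). If K is a normal subgroup of A with A/K a nonabelian simple group, then M_G(A) ≤ K. Consequently A/M_G(A) surjects onto every nonabelian simple quotient of A. -/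
open scoped commutatorElement

/-!
If `M_G(A) ≰ K`, then, being `G`-invariant, `M_G(A)` lies in no `G`-conjugate `K^g`. Each
`A ⧸ K^g` is nonabelian simple, hence perfect, so for normal `M, N` with `M ⊔ N = A` and
`M ≰ K^g` the commutator `⁅M, N⁆ ≤ M ⊓ N` already supplements `K^g`, which gives
`M ⊔ (K^g ⊓ N) = A`. By induction `M_G(A)` supplements the `G`-core `D = ⋂_g K^g`, a proper
`G`-invariant subgroup of `A`. A maximal `G`-invariant `B ≥ D` contains `M_G(A)`, so
`A = M_G(A) ⊔ D ≤ B`, a contradiction.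
-/

open Subgroup QuotientGroup

section Quotient

variable {H : Type*} [Group H]

lemma commutator_eq_top_of_exists_mul_ne_mul {Q : Type*} [Group Q] [IsSimpleGroup Q]
    (h : ∃ a b : Q, a * b ≠ b * a) : commutator Q = ⊤ := by
  refine (commutator_normal (⊤ : Subgroup Q) ⊤).eq_bot_or_eq_top.resolve_left fun hbot => ?_
  obtain ⟨a, b, hab⟩ := h
  have hmem : ⁅a, b⁆ ∈ ⁅(⊤ : Subgroup Q), ⊤⁆ := commutator_mem_commutator (mem_top a) (mem_top b)
  rw [hbot, mem_bot, commutatorElement_eq_one_iff_mul_comm] at hmem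
  exact hab hmem

lemma sup_eq_top_of_map_mk'_eq_top {K N : Subgroup H} [K.Normal]
    (h : N.map (mk' K) = ⊤) : K ⊔ N = ⊤ := by
  rw [← comap_map_mk', h, comap_top]

lemma map_mk'_eq_top_of_not_le {K N : Subgroup H} [K.Normal] [IsSimpleGroup (H ⧸ K)]
    [hN : N.Normal] (h : ¬ N ≤ K) : N.map (mk' K) = ⊤ :=
  (hN.map _ (mk'_surjective K)).eq_bot_or_eq_top.resolve_left fun hbot =>
    h (by rwa [Subgroup.map_eq_bot_iff, ker_mk'] at hbot)

lemma sup_inf_eq_top_of_sup_eq_top {M K₁ K₂ : Subgroup H} [M.Normal] [K₁.Normal] [K₂.Normal]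
    [IsSimpleGroup (H ⧸ K₁)] (hnonab : ∃ a b : H ⧸ K₁, a * b ≠ b * a) (hM : ¬ M ≤ K₁)
    (hMK₂ : M ⊔ K₂ = ⊤) : M ⊔ (K₁ ⊓ K₂) = ⊤ := by
  by_cases hK₂ : K₂ ≤ K₁
  · rwa [inf_eq_right.mpr hK₂]
  -- `H ⧸ K₁` is perfect, so already `⁅M, K₂⁆ ≤ M ⊓ K₂` supplements `K₁`.
  have hcomm : K₁ ⊔ ⁅M, K₂⁆ = ⊤ := sup_eq_top_of_map_mk'_eq_top <| by
    rw [map_commutator, map_mk'_eq_top_of_not_le hM, map_mk'_eq_top_of_not_le hK₂,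
      ← commutator_def, commutator_eq_top_of_exists_mul_ne_mul hnonab]
  -- Dedekind's modular law, with `K₁` normal.
  have hK₂le : K₂ ≤ M ⊔ (K₁ ⊓ K₂) := by
    intro x hx
    have hx' : x ∈ K₁ ⊔ (M ⊓ K₂) :=
      sup_le_sup_left (le_inf (commutator_le_left M K₂) (commutator_le_right M K₂)) K₁
        (hcomm ▸ mem_top x)
    rw [← SetLike.mem_coe, normal_mul] at hx'
    obtain ⟨k, hk, y, hy, rfl⟩ := hx'
    have hkK₂ : k ∈ K₂ := by simpa using mul_mem hx (inv_mem hy.2)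
    exact mul_mem (mem_sup_right ⟨hk, hkK₂⟩) (mem_sup_left hy.1)
  rw [eq_top_iff, ← hMK₂]
  exact sup_le le_sup_left hK₂le

lemma sup_iInf_eq_top {ι : Type*} [Finite ι] {M : Subgroup H} [M.Normal] (K : ι → Subgroup H)
    [∀ i, (K i).Normal] (hsimple : ∀ i, IsSimpleGroup (H ⧸ K i))
    (hnonab : ∀ i, ∃ a b : H ⧸ K i, a * b ≠ b * a) (hM : ∀ i, ¬ M ≤ K i) :
    M ⊔ ⨅ i, K i = ⊤ := by
  classical
  cases nonempty_fintype ι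
  suffices h : ∀ s : Finset ι, M ⊔ s.inf K = ⊤ by
    simpa only [Finset.inf_univ_eq_iInf] using h .univ
  intro s
  induction s using Finset.induction_on with
  | empty => simp
  | insert i s _ ih =>
    have : (s.inf K).Normal := Finset.inf_induction inferInstance
      (fun _ h₁ _ h₂ => @normal_inf_normal _ _ _ _ h₁ h₂) fun i _ => inferInstance
    have := hsimple i
    rw [Finset.inf_insert]
    exact sup_inf_eq_top_of_sup_eq_top (hnonab i) (hM i) ih

def quotientComapEquiv (K : Subgroup H) [K.Normal] (e : H ≃* H) :
    H ⧸ K.comap e.toMonoidHom ≃* H ⧸ K :=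
  QuotientGroup.congr _ K e (map_comap_eq_self_of_surjective e.surjective K)

lemma MulEquiv.exists_mul_ne_mul {P Q : Type*} [Group P] [Group Q] (e : P ≃* Q)
    (h : ∃ a b : Q, a * b ≠ b * a) : ∃ a b : P, a * b ≠ b * a := by
  obtain ⟨a, b, hab⟩ := h
  exact ⟨e.symm a, e.symm b, fun h => hab (by simpa using congrArg e h)⟩

end Quotient

section Invariant

variable {G : Type*} [Group G] {A : Subgroup G}

lemma conj_mem_MG (g : G) {x : G} (hx : x ∈ MG G A) : g * x * g⁻¹ ∈ MG G A := by
  rw [MG, mem_sInf] at hx ⊢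
  exact fun B hB => hB.1.2 g x (hx B hB)

lemma exists_isMaxGInv_ge [Finite G] {D : Subgroup G} (hD : IsGInv G A D) (hDA : D < A) :
    ∃ B, IsMaxGInv G A B ∧ D ≤ B := by
  obtain ⟨B, hDB, ⟨hB, hBA⟩, hBmax⟩ :=
    Finite.exists_le_maximal (p := fun B => IsGInv G A B ∧ B < A) ⟨hD, hDA⟩
  exact ⟨B, ⟨hB, hBA, fun C hC hCA hBC => le_antisymm hBC (hBmax ⟨hC, hCA⟩ hBC)⟩, hDB⟩

lemma IsGInv.eq_of_le_MG_sup [Finite G] {D : Subgroup G} (hD : IsGInv G A D)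
    (h : A ≤ MG G A ⊔ D) : D = A := by
  by_contra hne
  obtain ⟨B, hB, hDB⟩ := exists_isMaxGInv_ge hD (hD.1.lt_of_ne hne)
  exact hB.2.1.not_ge (h.trans (sup_le (sInf_le hB) hDB))

variable (G A) [A.Normal]

def conjCore (K : Subgroup A) : Subgroup A :=
  ⨅ g : G, K.comap (MulAut.conjNormal g).toMonoidHom

variable {G A}

lemma mem_conjCore {K : Subgroup A} {y : A} :
    y ∈ conjCore G A K ↔ ∀ g : G, MulAut.conjNormal g y ∈ K := by
  simp [conjCore, mem_iInf]

lemma conjCore_le (K : Subgroup A) : conjCore G A K ≤ K := fun y hy => by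
  simpa using mem_conjCore.1 hy 1

lemma isGInv_map_conjCore (K : Subgroup A) : IsGInv G A ((conjCore G A K).map A.subtype) := by
  refine ⟨map_subtype_le _, ?_⟩
  rintro g _ ⟨y, hy, rfl⟩
  refine ⟨MulAut.conjNormal g y, mem_conjCore.2 fun g' => ?_, MulAut.conjNormal_apply g y⟩
  rw [← MulAut.mul_apply, ← map_mul]
  exact mem_conjCore.1 hy (g' * g)

instance normal_MG_subgroupOf : ((MG G A).subgroupOf A).Normal :=
  ⟨fun x hx a => by simpa [mem_subgroupOf] using conj_mem_MG (a : G) hx⟩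

lemma MG_subgroupOf_le_of_le_comap {K : Subgroup A} (g : G)
    (h : (MG G A).subgroupOf A ≤ K.comap (MulAut.conjNormal g).toMonoidHom) :
    (MG G A).subgroupOf A ≤ K := fun x hx => by
  have hx' : MulAut.conjNormal g⁻¹ x ∈ (MG G A).subgroupOf A := by
    simpa [mem_subgroupOf] using conj_mem_MG g⁻¹ hx
  have hcancel : MulAut.conjNormal g (MulAut.conjNormal g⁻¹ x) = x := by
    rw [← MulAut.mul_apply, ← map_mul, mul_inv_cancel, map_one, MulAut.one_apply]
  simpa [hcancel] using h hx'

end Invariant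

theorem MG_le_of_nonabelian_simple_quotient_general (G : Type*) [Group G] [Finite G]
    (A : Subgroup G) [A.Normal]
    (K : Subgroup A) [K.Normal]
    (hsimple : IsSimpleGroup (A ⧸ K))
    (hKnonab : ∃ a b : A ⧸ K, a * b ≠ b * a) :
    (MG G A).subgroupOf A ≤ K := by
  by_contra hMK
  have hsup : (MG G A).subgroupOf A ⊔ conjCore G A K = ⊤ :=
    sup_iInf_eq_top _ (fun _ => (quotientComapEquiv K _).isSimpleGroup)
      (fun _ => (quotientComapEquiv K _).exists_mul_ne_mul hKnonab)
      (fun g hle => hMK (MG_subgroupOf_le_of_le_comap g hle))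
  have hcore : (conjCore G A K).map A.subtype = A := by
    refine (isGInv_map_conjCore K).eq_of_le_MG_sup ?_
    calc A = ((MG G A).subgroupOf A ⊔ conjCore G A K).map A.subtype := by
          rw [hsup, ← MonoidHom.range_eq_map, range_subtype]
      _ ≤ MG G A ⊔ (conjCore G A K).map A.subtype := by
        rw [Subgroup.map_sup, subgroupOf_map_subtype]
        exact sup_le_sup_right inf_le_left _
  have hcoreTop : conjCore G A K = ⊤ := map_injective A.subtype_injective <| by
    rw [hcore, ← MonoidHom.range_eq_map, range_subtype]
  have hKtop : K = ⊤ := top_le_iff.mp (hcoreTop ▸ conjCore_le K)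
  subst hKtop
  exact not_subsingleton (A ⧸ (⊤ : Subgroup A)) subsingleton_quotient_top

/-- Let `G` be finite and `A` a nontrivial normal subgroup such that `A/M_G(A)` is a
nonabelian chief factor of `G`.  If `K ⊴ A` with `A/K` nonabelian simple, then
`M_G(A) ≤ K`; consequently `A/M_G(A)` surjects onto every nonabelian simple quotient
of `A`. -/
theorem MG_le_of_nonabelian_simple_quotient (G : Type*) [Group G] [Finite G]
    (A : Subgroup G) [A.Normal] (hnt : A ≠ ⊥)
    (hchief : MG G A < A ∧
      ∀ M : Subgroup G, M.Normal → MG G A < M → M < A → False)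
    (hnonab : ∃ x ∈ A, ∃ y ∈ A, ⁅x, y⁆ ∉ MG G A)
    (K : Subgroup A) [K.Normal]
    (hsimple : IsSimpleGroup (A ⧸ K))
    (hKnonab : ∃ a b : A ⧸ K, a * b ≠ b * a) :
    (MG G A).subgroupOf A ≤ K :=
  MG_le_of_nonabelian_simple_quotient_general G A K hsimple hKnonab
end
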